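/- arXiv:2503.03659 — 3 statements merged into one kernel-verified Lean document; each statement's English description precedes it below -/
import Mathlib

section
/- Let n ≥ 1 and let (μ_1, …, μ_{n+1}) be a random vector in ℝ^{n+1} whose joint law is invariant under every permutation of its n+1 coordinates (i.e., the coordinates are exchangeable). Then for every natural number k with 0 ≤ k ≤ n+1, the probability P( #{i ∈ {1,…,n+1} : μ_i ≥ μ_{n+1}} ≤ k ) ≤ k/(n+1). -/
/-!
Let `r_j` be the number of coordinates `i` with `μ_j ≤ μ_i`. For any vector, at most `k` indices
`j` have `r_j ≤ k`: the smallest coordinate among them is dominated by all of them, so its rank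
already counts them all. Summing over `j`, the probabilities `P(r_j ≤ k)` add up to at most `k`,
and by exchangeability they all equal `P(r_{n+1} ≤ k)`.
-/

open MeasureTheory Finset
open scoped ENNReal

section

variable {ι α : Type*} [Fintype ι] [LinearOrder α]

def upperRank (x : ι → α) (j : ι) : ℕ := #{i | x j ≤ x i}

theorem upperRank_comp_perm (x : ι → α) (σ : Equiv.Perm ι) (j : ι) :
    upperRank (x ∘ σ) j = upperRank x (σ j) :=
  card_equiv σ (by simp)

theorem card_upperRank_le (x : ι → α) (k : ℕ) :
    #{j | upperRank x j ≤ k} ≤ k := by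
  rcases ({j | upperRank x j ≤ k} : Finset ι).eq_empty_or_nonempty with hS | hS
  · simp [hS]
  obtain ⟨j₀, hj₀, hmin⟩ := exists_min_image _ x hS
  calc #{j | upperRank x j ≤ k} ≤ upperRank x j₀ :=
        card_le_card fun i hi => by simpa using hmin i hi
    _ ≤ k := (mem_filter.mp hj₀).2

theorem measurable_upperRank [MeasurableSpace α] [TopologicalSpace α]
    [OpensMeasurableSpace α] [OrderClosedTopology α] [SecondCountableTopology α] (j : ι) :
    Measurable fun x : ι → α => upperRank x j := by
  simp only [upperRank, card_filter]
  exact Finset.measurable_sum _ fun i _ =>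
    Measurable.ite (measurableSet_le (measurable_pi_apply j) (measurable_pi_apply i))
      measurable_const measurable_const

open scoped Classical in
theorem sum_measure_le_of_forall_card_le {Ω : Type*} [MeasurableSpace Ω] (ℙ : Measure Ω)
    {A : ι → Set Ω} (hA : ∀ i, NullMeasurableSet (A i) ℙ) {k : ℕ}
    (hk : ∀ ω, #{i | ω ∈ A i} ≤ k) : ∑ i, ℙ (A i) ≤ k * ℙ Set.univ := by
  calc ∑ i, ℙ (A i) = ∫⁻ ω, ∑ i, (A i).indicator 1 ω ∂ℙ := by
        rw [lintegral_finsetSum' (f := fun i => (A i).indicator 1) _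
          fun i _ => aemeasurable_one.indicator₀ (hA i)]
        simp_rw [lintegral_indicator_one₀ (hA _)]
    _ ≤ ∫⁻ _, (k : ℝ≥0∞) ∂ℙ := lintegral_mono fun ω => by
        simpa [Set.indicator_apply, sum_boole] using hk ω
    _ = k * ℙ Set.univ := lintegral_const _

theorem measure_upperRank_le_eq_of_exchangeable [MeasurableSpace α] [TopologicalSpace α]
    [OpensMeasurableSpace α] [OrderClosedTopology α] [SecondCountableTopology α]
    {Ω : Type*} [MeasurableSpace Ω] {ℙ : Measure Ω}
    {X : Ω → ι → α} (hX : Measurable X)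
    (hexch : ∀ σ : Equiv.Perm ι, Measure.map (fun ω => X ω ∘ σ) ℙ = Measure.map X ℙ)
    (k : ℕ) (j j' : ι) :
    ℙ {ω | upperRank (X ω) j ≤ k} = ℙ {ω | upperRank (X ω) j' ≤ k} := by
  classical
  have hσ : ProbabilityTheory.IdentDistrib (fun ω => X ω ∘ Equiv.swap j j') X ℙ ℙ :=
    ⟨(measurable_pi_lambda _ fun i => (measurable_pi_apply _).comp hX).aemeasurable,
      hX.aemeasurable, hexch _⟩
  have h : ℙ {ω | upperRank (X ω ∘ Equiv.swap j j') j ≤ k} =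
      ℙ {ω | upperRank (X ω) j ≤ k} :=
    hσ.measure_mem_eq (measurable_upperRank j (measurableSet_Iic (a := k)))
  rw [← h]
  simp only [upperRank_comp_perm, Equiv.swap_apply_left]

end

theorem conformal_rank_tail_bound_general {Ω : Type*} [MeasurableSpace Ω]
    (ℙ : Measure Ω) [IsProbabilityMeasure ℙ]
    (n : ℕ) (μ : Ω → Fin (n + 1) → ℝ) (hμ : Measurable μ)
    (hexch : ∀ σ : Equiv.Perm (Fin (n + 1)),
      Measure.map (fun ω => μ ω ∘ σ) ℙ = Measure.map μ ℙ)
    (k : ℕ) :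
    ℙ {ω | (univ.filter (fun i : Fin (n + 1) => μ ω (Fin.last n) ≤ μ ω i)).card ≤ k}
      ≤ (k : ℝ≥0∞) / (n + 1) := by
  have hsum := sum_measure_le_of_forall_card_le ℙ (A := fun j => {ω | upperRank (μ ω) j ≤ k})
    (fun j => ((measurable_upperRank j).comp hμ (measurableSet_Iic (a := k))).nullMeasurableSet)
    (fun ω => by simpa only [Set.mem_ofPred_eq] using card_upperRank_le (μ ω) k)
  simp only [measure_upperRank_le_eq_of_exchangeable hμ hexch k _ (Fin.last n), sum_const,
    card_univ, Fintype.card_fin, nsmul_eq_mul, measure_univ, mul_one] at hsum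
  rw [ENNReal.le_div_iff_mul_le (by simp) (by simp), mul_comm]
  exact_mod_cast hsum

/-- If `(μ_1, …, μ_{n+1})` is an exchangeable random vector in `ℝ^{n+1}`,
then for every `0 ≤ k ≤ n+1`, `P(#{i : μ_i ≥ μ_{n+1}} ≤ k) ≤ k/(n+1)`. -/
theorem conformal_rank_tail_bound {Ω : Type*} [MeasurableSpace Ω]
    (ℙ : Measure Ω) [IsProbabilityMeasure ℙ]
    (n : ℕ) (hn : 1 ≤ n) (μ : Ω → Fin (n + 1) → ℝ) (hμ : Measurable μ)
    (hexch : ∀ σ : Equiv.Perm (Fin (n + 1)),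
      Measure.map (fun ω => μ ω ∘ σ) ℙ = Measure.map μ ℙ)
    (k : ℕ) (hk : k ≤ n + 1) :
    ℙ {ω | (univ.filter (fun i : Fin (n + 1) => μ ω (Fin.last n) ≤ μ ω i)).card ≤ k}
      ≤ (k : ℝ≥0∞) / (n + 1) :=
  conformal_rank_tail_bound_general ℙ n μ hμ hexch k
end

section
/- Let n ≥ 1, let Z_1, …, Z_{n+1} be random variables taking values in a measurable space 𝒵 whose joint law is invariant under every permutation of the n+1 coordinates, and let M : 𝒵^n × 𝒵 → ℝ be a measurable function that is invariant under every permutation of the n coordinates of its first argument. Define the nonconformity scores μ_j = M((Z_i)_{i ∈ {1,…,n+1} \setminus \{j\}}, Z_j) for j = 1, …, n+1 (where the n remaining observations are listed in increasing order of index). Then the joint law of (μ_1, …, μ_{n+1}) is invariant under every permutation of its n+1 coordinates. -/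
open MeasureTheory Finset

/-- For a permutation `σ` of `Fin (n+1)` and `j : Fin (n+1)`, there is a
permutation `τ` of `Fin n` with `σ ∘ j.succAbove = (σ j).succAbove ∘ τ`. -/
lemma succAbove_perm_exists {n : ℕ} (σ : Equiv.Perm (Fin (n + 1))) (j : Fin (n + 1)) :
    ∃ τ : Equiv.Perm (Fin n), ∀ i, σ (j.succAbove i) = (σ j).succAbove (τ i) := by
  refine ⟨(finSuccAboveEquiv j).trans
    ((σ.subtypeEquiv (fun x => by simp [σ.injective.eq_iff])).trans
      (finSuccAboveEquiv (σ j)).symm), fun i => ?_⟩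
  simp only [Equiv.trans_apply, finSuccAboveEquiv_apply, Equiv.subtypeEquiv_apply]
  have := (finSuccAboveEquiv (σ j)).apply_symm_apply
    ⟨σ (j.succAbove i), by simp [σ.injective.eq_iff, j.succAbove_ne i]⟩
  rw [finSuccAboveEquiv_apply] at this
  exact (congrArg Subtype.val this).symm

/-- If `(Z_1, …, Z_{n+1})` is exchangeable and `M` is a measurable
nonconformity measure invariant under permutations of its bag argument, then the
nonconformity scores `μ_j = M((Z_i)_{i ≠ j}, Z_j)` are exchangeable. -/
theorem nonconformity_scores_exchangeable {Ω 𝒵 : Type*} [MeasurableSpace Ω]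
    [MeasurableSpace 𝒵] (ℙ : Measure Ω) [IsProbabilityMeasure ℙ]
    (n : ℕ) (hn : 1 ≤ n) (Z : Ω → Fin (n + 1) → 𝒵) (hZ : Measurable Z)
    (hexch : ∀ σ : Equiv.Perm (Fin (n + 1)),
      Measure.map (fun ω => Z ω ∘ σ) ℙ = Measure.map Z ℙ)
    (M : (Fin n → 𝒵) → 𝒵 → ℝ) (hM : Measurable (Function.uncurry M))
    (hMinv : ∀ (σ : Equiv.Perm (Fin n)) (b : Fin n → 𝒵) (z : 𝒵), M (b ∘ σ) z = M b z)
    (μ : Ω → Fin (n + 1) → ℝ)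
    (hμdef : ∀ ω j, μ ω j = M (fun i => Z ω (j.succAbove i)) (Z ω j)) :
    ∀ σ : Equiv.Perm (Fin (n + 1)),
      Measure.map (fun ω => μ ω ∘ σ) ℙ = Measure.map μ ℙ := by
  intro σ
  set S : (Fin (n + 1) → 𝒵) → Fin (n + 1) → ℝ :=
    fun z j => M (fun i => z (j.succAbove i)) (z j) with hS
  have hSmeas : Measurable S := by
    refine measurable_pi_lambda _ (fun j => ?_)
    have : (fun z : Fin (n + 1) → 𝒵 => M (fun i => z (j.succAbove i)) (z j)) =
        Function.uncurry M ∘ (fun z => ((fun i => z (j.succAbove i)), z j)) := rfl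
    rw [this]
    exact hM.comp ((measurable_pi_lambda _ (fun i => measurable_pi_apply _)).prodMk
      (measurable_pi_apply j))
  have hkey : ∀ z : Fin (n + 1) → 𝒵, S (z ∘ σ) = S z ∘ σ := by
    intro z
    funext j
    obtain ⟨τ, hτ⟩ := succAbove_perm_exists σ j
    have h2 : (fun i => z (σ (j.succAbove i))) =
        (fun i => z ((σ j).succAbove i)) ∘ τ := by
      funext i; simp [hτ i]
    show M (fun i => z (σ (j.succAbove i))) (z (σ j)) = _
    rw [h2, hMinv]
    rfl
  have hμS : μ = S ∘ Z := by
    funext ω j; simp [hS, hμdef ω j]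
  have h1 : (fun ω => μ ω ∘ σ) = S ∘ (fun ω => Z ω ∘ σ) := by
    funext ω; simp [hμS, ← hkey]
  have hg : Measurable (fun ω => Z ω ∘ σ) :=
    measurable_pi_lambda _ (fun i => (measurable_pi_apply _).comp hZ)
  rw [h1, hμS, ← Measure.map_map hSmeas hg, hexch σ, Measure.map_map hSmeas hZ]
end

section
/- Let n ≥ 1, let Z_1, …, Z_{n+1} be random variables taking values in a measurable space 𝒵 whose joint law is invariant under every permutation of the n+1 coordinates, let M : 𝒵^n × 𝒵 → ℝ be a measurable function invariant under permutations of its first argument, define μ_j = M((Z_i)_{i ≠ j}, Z_j) and pl = (n+1)^{-1} Σ_{i=1}^{n+1} 1{μ_i ≥ μ_{n+1}}, and assume that almost surely the scores μ_1, …, μ_{n+1} are pairwise distinct. If α ∈ (0,1) is such that (n+1)α is an integer, then P( pl ≤ (n+1)^{-1}⌊(n+1)α⌋ ) = α. -/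
open MeasureTheory Finset
open scoped ENNReal

/-!
The scores are a fixed permutation-equivariant function of the data, so they inherit
exchangeability, and the rank of the last score has the same law as the rank of any other.
When the scores are distinct their ranks are a permutation of `1, …, n + 1`, so exactly
`k = (n + 1)α` of the events `rank ≤ k` occur; summing their probabilities over all coordinates
gives `(n + 1) · ℙ(rank of the last score ≤ k) = k`, and `pl ≤ ⌊(n + 1)α⌋ / (n + 1)` is exactly
that event.
-/

section Rank

variable {ι α : Type*} [Fintype ι] [LinearOrder α]

-- Ranks are descending: the largest coordinate has rank 1.
def rank (v : ι → α) (j : ι) : ℕ := #{i | v j ≤ v i}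

lemma rank_comp_perm (v : ι → α) (σ : Equiv.Perm ι) (j : ι) :
    rank (v ∘ σ) j = rank v (σ j) :=
  card_equiv σ (by simp)

lemma rank_lt_rank_of_lt {v : ι → α} {a b : ι} (h : v a < v b) : rank v b < rank v a := by
  refine card_lt_card ⟨monotone_filter_right _ fun i _ hi => h.le.trans hi, fun hsub => ?_⟩
  have := hsub (mem_filter.2 ⟨mem_univ a, le_rfl⟩)
  exact (mem_filter.1 this).2.not_gt h

lemma rank_injective {v : ι → α} (hv : Function.Injective v) : Function.Injective (rank v) := by
  intro a b hab
  by_contra hne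
  rcases (hv.ne hne).lt_or_gt with h | h
  · exact (rank_lt_rank_of_lt h).ne hab.symm
  · exact (rank_lt_rank_of_lt h).ne hab

lemma rank_mem_Icc (v : ι → α) (j : ι) : rank v j ∈ Icc 1 (Fintype.card ι) :=
  mem_Icc.2 ⟨card_pos.2 ⟨j, by simp⟩, card_filter_le _ _⟩

lemma image_rank {v : ι → α} (hv : Function.Injective v) :
    univ.image (rank v) = Icc 1 (Fintype.card ι) :=
  eq_of_subset_of_card_le (image_subset_iff.2 fun j _ => rank_mem_Icc v j)
    (by simp [card_image_of_injective _ (rank_injective hv)])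

lemma card_rank_le {v : ι → α} (hv : Function.Injective v) {k : ℕ} (hk : k ≤ Fintype.card ι) :
    #{j | rank v j ≤ k} = k := by
  calc #{j | rank v j ≤ k} = #{x ∈ univ.image (rank v) | x ≤ k} := by
        rw [filter_image, card_image_of_injective _ (rank_injective hv)]
    _ = #{x ∈ Icc 1 (Fintype.card ι) | x ≤ k} := by rw [image_rank hv]
    _ = k := by
        rw [show {x ∈ Icc 1 (Fintype.card ι) | x ≤ k} = Icc 1 k by
          ext; simp only [mem_filter, mem_Icc]; omega]
        simp

variable [MeasurableSpace α] [TopologicalSpace α] [OpensMeasurableSpace α] [OrderClosedTopology α]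
  [SecondCountableTopology α]

lemma measurable_rank (j : ι) : Measurable fun v : ι → α => rank v j := by
  simp_rw [rank, card_filter]
  exact Finset.measurable_sum _ fun i _ =>
    Measurable.ite (measurableSet_le (measurable_pi_apply j) (measurable_pi_apply i))
      measurable_const measurable_const

end Rank

section Exchangeable

variable {Ω ι β : Type*} [MeasurableSpace Ω] [MeasurableSpace β]

def Exchangeable (X : Ω → ι → β) (P : Measure Ω) : Prop :=
  ∀ σ : Equiv.Perm ι, P.map (fun ω => X ω ∘ σ) = P.map X

lemma measurable_comp_perm (σ : Equiv.Perm ι) : Measurable fun v : ι → β => v ∘ σ :=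
  measurable_pi_lambda _ fun i => measurable_pi_apply (σ i)

lemma Exchangeable.comp_equivariant {γ : Type*} [MeasurableSpace γ] {X : Ω → ι → β}
    {P : Measure Ω} (h : Exchangeable X P) (hX : Measurable X) {F : (ι → β) → ι → γ}
    (hF : Measurable F) (hFσ : ∀ (σ : Equiv.Perm ι) v, F (v ∘ σ) = F v ∘ σ) :
    Exchangeable (fun ω => F (X ω)) P := by
  intro σ
  have hFXσ : (fun ω => F (X ω) ∘ σ) = F ∘ fun ω => X ω ∘ σ := funext fun ω => (hFσ σ (X ω)).symm
  have hXσ : Measurable fun ω => X ω ∘ σ := (measurable_comp_perm σ).comp hX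
  rw [hFXσ, ← Measure.map_map hF hXσ, h σ, Measure.map_map hF hX]
  rfl

variable [Fintype ι] [LinearOrder β] [TopologicalSpace β] [OpensMeasurableSpace β]
  [OrderClosedTopology β] [SecondCountableTopology β] {X : Ω → ι → β} {P : Measure Ω}

lemma measurableSet_rank_le (hX : Measurable X) (j : ι) (k : ℕ) :
    MeasurableSet {ω | rank (X ω) j ≤ k} :=
  measurableSet_le ((measurable_rank j).comp hX) measurable_const

lemma Exchangeable.measure_rank_le_eq (h : Exchangeable X P) (hX : Measurable X) (k : ℕ)
    (i j : ι) : P {ω | rank (X ω) i ≤ k} = P {ω | rank (X ω) j ≤ k} := by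
  classical
  set σ := Equiv.swap i j
  have hS : MeasurableSet {v : ι → β | rank v j ≤ k} := measurableSet_rank_le measurable_id j k
  calc P {ω | rank (X ω) i ≤ k} = P ((fun ω => X ω ∘ σ) ⁻¹' {v | rank v j ≤ k}) := by
        simp [σ, rank_comp_perm]
    _ = P.map (fun ω => X ω ∘ σ) {v | rank v j ≤ k} :=
        (Measure.map_apply ((measurable_comp_perm σ).comp hX) hS).symm
    _ = P {ω | rank (X ω) j ≤ k} := by rw [h σ, Measure.map_apply hX hS]; rfl

lemma sum_measure_rank_le [IsProbabilityMeasure P] (hX : Measurable X)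
    (hinj : ∀ᵐ ω ∂P, Function.Injective (X ω)) {k : ℕ} (hk : k ≤ Fintype.card ι) :
    ∑ j, P {ω | rank (X ω) j ≤ k} = k := by
  have hcount : ∀ᵐ ω ∂P, ∑ j, {ω | rank (X ω) j ≤ k}.indicator (1 : Ω → ℝ≥0∞) ω = k := by
    filter_upwards [hinj] with ω hω
    simp_rw [Set.indicator_apply, Set.mem_ofPred_eq, Pi.one_apply]
    rw [sum_boole, card_rank_le hω hk]
  calc ∑ j, P {ω | rank (X ω) j ≤ k}
      = ∑ j, ∫⁻ ω, {ω | rank (X ω) j ≤ k}.indicator 1 ω ∂P := by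
        simp_rw [lintegral_indicator_one (measurableSet_rank_le hX _ k)]
    _ = ∫⁻ ω, ∑ j, {ω | rank (X ω) j ≤ k}.indicator 1 ω ∂P :=
        (lintegral_finsetSum _ fun j _ =>
          measurable_const.indicator (measurableSet_rank_le hX j k)).symm
    _ = k := by rw [lintegral_congr_ae hcount]; simp

lemma Exchangeable.measure_rank_le [IsProbabilityMeasure P] (h : Exchangeable X P)
    (hX : Measurable X) (hinj : ∀ᵐ ω ∂P, Function.Injective (X ω)) {k : ℕ}
    (hk : k ≤ Fintype.card ι) (j : ι) :
    P {ω | rank (X ω) j ≤ k} = k / Fintype.card ι := by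
  have hι : (Fintype.card ι : ℝ≥0∞) ≠ 0 := by
    simpa using (Fintype.card_pos_iff.2 ⟨j⟩).ne'
  rw [ENNReal.eq_div_iff hι (ENNReal.natCast_ne_top _), ← sum_measure_rank_le hX hinj hk]
  simp [h.measure_rank_le_eq hX k _ j, card_univ, nsmul_eq_mul]

end Exchangeable

lemma exists_equiv_comp_eq_of_range_eq {α α' β : Type*} {e : α → β} {e' : α' → β}
    (he : Function.Injective e) (he' : Function.Injective e') (h : Set.range e = Set.range e') :
    ∃ τ : α ≃ α', e' ∘ τ = e :=
  ⟨(Equiv.ofInjective e he).trans ((Equiv.setCongr h).trans (Equiv.ofInjective e' he').symm),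
    funext fun a => by simp [Equiv.apply_ofInjective_symm]⟩

lemma exists_perm_comp_succAbove {n : ℕ} (σ : Equiv.Perm (Fin (n + 1))) (j : Fin (n + 1)) :
    ∃ τ : Equiv.Perm (Fin n), (σ j).succAbove ∘ τ = σ ∘ j.succAbove := by
  refine exists_equiv_comp_eq_of_range_eq (σ.injective.comp Fin.succAbove_right_injective)
    Fin.succAbove_right_injective ?_
  rw [Set.range_comp, Fin.range_succAbove, Fin.range_succAbove, Set.image_compl_eq σ.bijective,
    Set.image_singleton]

section LeaveOneOut

variable {𝒵 : Type*} {n : ℕ}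

def leaveOneOutScore (M : (Fin n → 𝒵) → 𝒵 → ℝ) (z : Fin (n + 1) → 𝒵) (j : Fin (n + 1)) : ℝ :=
  M (fun i => z (j.succAbove i)) (z j)

lemma leaveOneOutScore_comp_perm {M : (Fin n → 𝒵) → 𝒵 → ℝ}
    (hM : ∀ (σ : Equiv.Perm (Fin n)) (b : Fin n → 𝒵) (z : 𝒵), M (b ∘ σ) z = M b z)
    (σ : Equiv.Perm (Fin (n + 1))) (z : Fin (n + 1) → 𝒵) :
    leaveOneOutScore M (z ∘ σ) = leaveOneOutScore M z ∘ σ := by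
  funext j
  obtain ⟨τ, hτ⟩ := exists_perm_comp_succAbove σ j
  have hb : (fun i => z (σ (j.succAbove i))) = (fun i => z ((σ j).succAbove i)) ∘ τ := by
    funext i
    exact congrArg z (congrFun hτ i).symm
  simp only [leaveOneOutScore, Function.comp_apply, hb, hM]

lemma measurable_leaveOneOutScore [MeasurableSpace 𝒵] {M : (Fin n → 𝒵) → 𝒵 → ℝ}
    (hM : Measurable (Function.uncurry M)) : Measurable (leaveOneOutScore M) :=
  measurable_pi_lambda _ fun j =>
    hM.comp (f := fun z : Fin (n + 1) → 𝒵 => (fun i => z (j.succAbove i), z j)) <|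
      (measurable_pi_lambda _ fun _ => measurable_pi_apply _).prodMk (measurable_pi_apply j)

end LeaveOneOut

theorem conformal_finite_sample_exactness_general {Ω 𝒵 : Type*} [MeasurableSpace Ω]
    [MeasurableSpace 𝒵] (ℙ : Measure Ω) [IsProbabilityMeasure ℙ]
    (n : ℕ) (α : ℝ) (hα : α ∈ Set.Ioo (0 : ℝ) 1)
    (Z : Ω → Fin (n + 1) → 𝒵) (hZ : Measurable Z)
    (hexch : ∀ σ : Equiv.Perm (Fin (n + 1)),
      Measure.map (fun ω => Z ω ∘ σ) ℙ = Measure.map Z ℙ)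
    (M : (Fin n → 𝒵) → 𝒵 → ℝ) (hM : Measurable (Function.uncurry M))
    (hMinv : ∀ (σ : Equiv.Perm (Fin n)) (b : Fin n → 𝒵) (z : 𝒵), M (b ∘ σ) z = M b z)
    (μ : Ω → Fin (n + 1) → ℝ)
    (hμdef : ∀ ω j, μ ω j = M (fun i => Z ω (j.succAbove i)) (Z ω j))
    (hdist : ∀ᵐ ω ∂ℙ, Function.Injective (μ ω))
    (pl : Ω → ℝ)
    (hpl : ∀ ω, pl ω =
      ((univ.filter (fun i : Fin (n + 1) => μ ω (Fin.last n) ≤ μ ω i)).card : ℝ) / (n + 1))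
    (hint : ∃ m : ℤ, ((n : ℝ) + 1) * α = m) :
    ℙ {ω | pl ω ≤ (⌊((n : ℝ) + 1) * α⌋ : ℝ) / (n + 1)} = ENNReal.ofReal α := by
  obtain ⟨m, hm⟩ := hint
  lift m to ℕ using by exact_mod_cast hm ▸ (mul_pos (by positivity) hα.1).le with k
  rw [Int.cast_natCast] at hm
  have hkn : k ≤ n + 1 := by exact_mod_cast hm ▸ mul_le_of_le_one_right (by positivity) hα.2.le
  have hμ : μ = fun ω => leaveOneOutScore M (Z ω) := funext fun ω => funext (hμdef ω)
  have hμmeas : Measurable μ := hμ ▸ (measurable_leaveOneOutScore hM).comp hZ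
  have hμexch : Exchangeable μ ℙ :=
    hμ ▸ Exchangeable.comp_equivariant hexch hZ (measurable_leaveOneOutScore hM)
      (leaveOneOutScore_comp_perm hMinv)
  have hevent : {ω | pl ω ≤ (⌊((n : ℝ) + 1) * α⌋ : ℝ) / (n + 1)} =
      {ω | rank (μ ω) (Fin.last n) ≤ k} := by
    ext ω
    simp [hpl, hm, rank, div_le_div_iff_of_pos_right (by positivity : (0 : ℝ) < n + 1)]
  have hαk : α = k / (n + 1 : ℕ) := by
    rw [eq_div_iff (by positivity)]
    push_cast
    linarith
  rw [hevent, hμexch.measure_rank_le hμmeas hdist (by simpa using hkn), Fintype.card_fin, hαk,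
    ENNReal.ofReal_div_of_pos (by positivity), ENNReal.ofReal_natCast, ENNReal.ofReal_natCast]

/-- exactness in Theorem 1 of the paper. Under exchangeability, with a
permutation-invariant measurable nonconformity measure, scores that are almost surely
pairwise distinct, and `(n+1)α` being an integer, `P(pl ≤ ⌊(n+1)α⌋/(n+1)) = α`. -/
theorem conformal_finite_sample_exactness {Ω 𝒵 : Type*} [MeasurableSpace Ω]
    [MeasurableSpace 𝒵] (ℙ : Measure Ω) [IsProbabilityMeasure ℙ]
    (n : ℕ) (hn : 1 ≤ n) (α : ℝ) (hα : α ∈ Set.Ioo (0 : ℝ) 1)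
    (Z : Ω → Fin (n + 1) → 𝒵) (hZ : Measurable Z)
    (hexch : ∀ σ : Equiv.Perm (Fin (n + 1)),
      Measure.map (fun ω => Z ω ∘ σ) ℙ = Measure.map Z ℙ)
    (M : (Fin n → 𝒵) → 𝒵 → ℝ) (hM : Measurable (Function.uncurry M))
    (hMinv : ∀ (σ : Equiv.Perm (Fin n)) (b : Fin n → 𝒵) (z : 𝒵), M (b ∘ σ) z = M b z)
    (μ : Ω → Fin (n + 1) → ℝ)
    (hμdef : ∀ ω j, μ ω j = M (fun i => Z ω (j.succAbove i)) (Z ω j))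
    (hdist : ∀ᵐ ω ∂ℙ, Function.Injective (μ ω))
    (pl : Ω → ℝ)
    (hpl : ∀ ω, pl ω =
      ((univ.filter (fun i : Fin (n + 1) => μ ω (Fin.last n) ≤ μ ω i)).card : ℝ) / (n + 1))
    (hint : ∃ m : ℤ, ((n : ℝ) + 1) * α = m) :
    ℙ {ω | pl ω ≤ (⌊((n : ℝ) + 1) * α⌋ : ℝ) / (n + 1)} = ENNReal.ofReal α :=
  conformal_finite_sample_exactness_general ℙ n α hα Z hZ hexch M hM hMinv μ hμdef hdist pl hpl hint
end
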